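/- arXiv:2302.03889 — 3 statements merged into one kernel-verified Lean document; each statement's English description precedes it below -/
import Mathlib

section
/- Let w : ℝ × (0,T) → ℝ be a bounded C¹ function with bounded spatial derivative that satisfies, at every point (z,t), the filtered nonlocal conservation law ∂_t w(z,t) = ∂_z (W∘w(·,t))̄(z). Then for every entropy/entropy-flux pair (η, Q) and every (z,t), ∂_t [η(w(z,t))] + D(z,t) = ∂_z (Q∘w(·,t))̄(z), where D(z,t) = ∫_0^∞ (−Φ_α')(ζ) · ( ∫_{w(z,t)}^{w(z+ζ,t)} ∫_{w(z,t)}^{σ} η''(μ) W'(σ) dμ dσ ) dζ, and D(z,t) ≥ 0. In particular, every such solution dissipates every convex entropy. -/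
/-!
Differentiating `h̄` under the integral sign and integrating by parts against `h (z + ·) - h z`,
which vanishes at `ζ = 0`, gives `∂_z h̄(z) = ∫₀^∞ (−Φ_α')(ζ) (h(z+ζ) − h(z)) dζ`. Applied to
`h = W ∘ w` and `h = Q ∘ w`, together with `∂_t η(w) = η'(w) ∂_t w`, this reduces the entropy
balance to the pointwise identity
`∫_a^b (η'(σ) − η'(a)) W'(σ) dσ = Q(b) − Q(a) − η'(a) (W(b) − W(a))`.
For `D ≥ 0`: `−Φ_α' ≥ 0` because `Φ` is non-increasing, and `(η'(σ) − η'(a)) W'(σ)` has the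
sign of `σ − a` because `η'` is monotone and `W' ≥ 0`.
-/

open MeasureTheory

/-- The anisotropic averaging operator
`h̄(z) = ∫₀^∞ Φ_α(ζ) h(z+ζ) dζ`, with `Φ_α(ζ) = (1/α)Φ(ζ/α)`. -/
noncomputable def nlAvg (Φ : ℝ → ℝ) (α : ℝ) (h : ℝ → ℝ) (z : ℝ) : ℝ :=
  ∫ ζ in Set.Ioi (0:ℝ), (1/α) * Φ (ζ/α) * h (z + ζ)

/-- The entropy dissipation term
`D(z,t) = ∫₀^∞ (−Φ_α')(ζ) ∫_{w(z,t)}^{w(z+ζ,t)} ∫_{w(z,t)}^{σ} η''(μ) W'(σ) dμ dσ dζ`. -/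
noncomputable def Dterm (Φ : ℝ → ℝ) (α : ℝ) (W η : ℝ → ℝ) (w : ℝ → ℝ → ℝ)
    (z t : ℝ) : ℝ :=
  ∫ ζ in Set.Ioi (0:ℝ),
    (-(deriv (fun s => (1/α) * Φ (s/α)) ζ)) *
      ∫ σ in (w z t)..(w (z+ζ) t),
        (∫ μ in (w z t)..σ, deriv (deriv η) μ) * deriv W σ

open Set Filter Topology

theorem AntitoneOn.tendsto_atTop_zero_of_integrableOn {φ : ℝ → ℝ}
    (hanti : AntitoneOn φ (Ici 0)) (hφ0 : ∀ x, 0 ≤ x → 0 ≤ φ x)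
    (hint : IntegrableOn φ (Ioi 0)) : Tendsto φ atTop (𝓝 0) := by
  have hψ : Antitone fun x => φ (max x 0) := fun x y hxy =>
    hanti (le_max_right x 0) (le_max_right y 0) (max_le_max_right 0 hxy)
  have hbdd : BddBelow (range fun x => φ (max x 0)) :=
    ⟨0, by rintro - ⟨x, rfl⟩; exact hφ0 _ (le_max_right _ _)⟩
  set c := ⨅ x, φ (max x 0)
  have hc : ∀ x, 0 ≤ x → c ≤ φ x := fun x hx => by
    simpa [max_eq_left hx] using ciInf_le hbdd x
  -- a positive lower bound on a half-line of infinite measure contradicts integrability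
  have hc0 : c = 0 := by
    refine le_antisymm (not_lt.1 fun hcpos => ?_) (le_ciInf fun x => hφ0 _ (le_max_right _ _))
    have hconst : IntegrableOn (fun _ => c) (Ioi (0:ℝ)) :=
      hint.mono' aestronglyMeasurable_const <| (ae_restrict_iff' measurableSet_Ioi).2 <|
        .of_forall fun x hx => by rw [Real.norm_of_nonneg hcpos.le]; exact hc x (le_of_lt hx)
    simp [integrableOn_const_iff, hcpos.ne'] at hconst
  rw [← hc0]
  exact (tendsto_atTop_ciInf hψ hbdd).congr' <|
    (eventually_ge_atTop 0).mono fun x hx => by simp [max_eq_left hx]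

theorem hasDerivAt_integral_mul_comp_add {φ g : ℝ → ℝ} {μ : Measure ℝ} {C C' : ℝ}
    (hφ : Integrable φ μ) (hg : Differentiable ℝ g) (hgC : ∀ x, |g x| ≤ C)
    (hg'C : ∀ x, |deriv g x| ≤ C') (z : ℝ) :
    HasDerivAt (fun x => ∫ ζ, φ ζ * g (x + ζ) ∂μ) (∫ ζ, φ ζ * deriv g (z + ζ) ∂μ) z := by
  have hmeas : ∀ (h : ℝ → ℝ) x, Measurable h →
      AEStronglyMeasurable (fun ζ => h (x + ζ)) μ := fun h x hh =>
    (hh.comp (measurable_const_add x)).aestronglyMeasurable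
  refine (hasDerivAt_integral_of_dominated_loc_of_deriv_le (F := fun x ζ => φ ζ * g (x + ζ))
    (F' := fun x ζ => φ ζ * deriv g (x + ζ)) (bound := fun ζ => |φ ζ| * C')
    univ_mem (.of_forall fun x => hφ.aestronglyMeasurable.mul (hmeas g x hg.continuous.measurable))
    (hφ.mul_bdd (hmeas g z hg.continuous.measurable) (.of_forall fun _ => hgC _))
    (hφ.aestronglyMeasurable.mul (hmeas _ z (measurable_deriv g)))
    (.of_forall fun ζ x _ => ?_) (hφ.abs.mul_const C') (.of_forall fun ζ x _ => ?_)).2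
  · rw [Real.norm_eq_abs, abs_mul]
    exact mul_le_mul_of_nonneg_left (hg'C _) (abs_nonneg _)
  · exact ((hg (x + ζ)).hasDerivAt.comp x ((hasDerivAt_id x).add_const ζ)).const_mul (φ ζ)
      |>.congr_deriv (by simp)

structure IsDecreasingKernel (φ : ℝ → ℝ) : Prop where
  differentiable : Differentiable ℝ φ
  nonneg : ∀ x, 0 ≤ x → 0 ≤ φ x
  antitoneOn : AntitoneOn φ (Ici 0)
  integrableOn : IntegrableOn φ (Ioi 0)

namespace IsDecreasingKernel

variable {φ g : ℝ → ℝ} {C : ℝ}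

theorem rescale (hφ : IsDecreasingKernel φ) {α : ℝ} (hα : 0 < α) :
    IsDecreasingKernel fun s => 1 / α * φ (s / α) := by
  have hα' : 0 ≤ 1 / α := by positivity
  refine ⟨(hφ.differentiable.comp (differentiable_id.div_const α)).const_mul _,
    fun x hx => mul_nonneg hα' (hφ.nonneg _ (div_nonneg hx hα.le)),
    fun x hx y hy hxy => mul_le_mul_of_nonneg_left
      (hφ.antitoneOn (div_nonneg hx hα.le) (div_nonneg hy hα.le) (by gcongr)) hα', ?_⟩
  have h := (integrableOn_Ioi_comp_mul_right_iff φ 0 (one_div_pos.2 hα)).2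
    (by simpa using hφ.integrableOn)
  simp_rw [mul_one_div] at h
  exact h.const_mul _

theorem tendsto_atTop (hφ : IsDecreasingKernel φ) : Tendsto φ atTop (𝓝 0) :=
  hφ.antitoneOn.tendsto_atTop_zero_of_integrableOn hφ.nonneg hφ.integrableOn

theorem deriv_nonpos (hφ : IsDecreasingKernel φ) {ζ : ℝ} (hζ : 0 < ζ) : deriv φ ζ ≤ 0 :=
  derivWithin_of_isOpen (f := φ) isOpen_Ioi (show ζ ∈ Ioi 0 from hζ) ▸
    (hφ.antitoneOn.mono Ioi_subset_Ici_self).derivWithin_nonpos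

theorem integrableOn_deriv (hφ : IsDecreasingKernel φ) : IntegrableOn (deriv φ) (Ioi 0) :=
  integrableOn_Ioi_deriv_of_nonpos (hφ.differentiable 0).continuousAt.continuousWithinAt
    (fun x _ => (hφ.differentiable x).hasDerivAt) (fun _ hx => hφ.deriv_nonpos hx)
    hφ.tendsto_atTop

theorem integrableOn_neg_deriv_mul_sub (hφ : IsDecreasingKernel φ) (hg : Continuous g)
    (hgC : ∀ x, |g x| ≤ C) (z : ℝ) :
    IntegrableOn (fun ζ => -deriv φ ζ * (g (z + ζ) - g z)) (Ioi 0) :=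
  hφ.integrableOn_deriv.neg.mul_bdd
    ((hg.comp (continuous_const_add z)).sub continuous_const).aestronglyMeasurable
    (.of_forall fun _ => (abs_sub _ _).trans (add_le_add (hgC _) (hgC _)))

/-- Integration by parts against `g (z + ·) - g z`, which vanishes at `0`, so that neither end
contributes a boundary term. -/
theorem integral_mul_deriv_comp_add (hφ : IsDecreasingKernel φ) (hg : Differentiable ℝ g)
    (hgC : ∀ x, |g x| ≤ C) {C' : ℝ} (hg'C : ∀ x, |deriv g x| ≤ C') (z : ℝ) :
    ∫ ζ in Ioi 0, φ ζ * deriv g (z + ζ) = ∫ ζ in Ioi 0, -deriv φ ζ * (g (z + ζ) - g z) := by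
  set v := fun ζ => g (z + ζ) - g z
  have hv : ∀ ζ, HasDerivAt v (deriv g (z + ζ)) ζ := fun ζ =>
    ((hg (z + ζ)).hasDerivAt.comp ζ ((hasDerivAt_id ζ).const_add z)).sub_const (g z)
      |>.congr_deriv (by simp)
  have hvC : ∀ ζ, |v ζ| ≤ C + C := fun ζ => (abs_sub _ _).trans (add_le_add (hgC _) (hgC _))
  have hv0 : Tendsto (φ * v) (𝓝[>] 0) (𝓝 0) := by
    have : Continuous (φ * v) :=
      hφ.differentiable.continuous.mul (continuous_iff_continuousAt.2 fun ζ => (hv ζ).continuousAt)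
    exact (this.tendsto' 0 0 (by simp [v])).mono_left nhdsWithin_le_nhds
  have hφv : ∀ ζ, ‖(φ * v) ζ‖ ≤ ‖φ ζ‖ * (C + C) := fun ζ => by
    rw [Pi.mul_apply, norm_mul]
    exact mul_le_mul_of_nonneg_left (hvC ζ) (norm_nonneg _)
  have hvinf : Tendsto (φ * v) atTop (𝓝 0) :=
    squeeze_zero_norm hφv (by simpa using hφ.tendsto_atTop.norm.mul_const (C + C))
  rw [integral_Ioi_mul_deriv_eq_deriv_mul (fun x _ => (hφ.differentiable x).hasDerivAt)
    (fun ζ _ => hv ζ) ?_ ?_ hv0 hvinf, sub_self, zero_sub, ← integral_neg]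
  · simp only [neg_mul, v]
  · exact hφ.integrableOn.mul_bdd
      ((measurable_deriv g).comp (measurable_const_add z)).aestronglyMeasurable
      (.of_forall fun _ => hg'C _)
  · exact (hφ.integrableOn_neg_deriv_mul_sub hg.continuous hgC z).neg.congr
      (.of_forall fun ζ => by simp [v])

theorem hasDerivAt_integral_mul_comp_add (hφ : IsDecreasingKernel φ) (hg : Differentiable ℝ g)
    (hgC : ∀ x, |g x| ≤ C) {C' : ℝ} (hg'C : ∀ x, |deriv g x| ≤ C') (z : ℝ) :
    HasDerivAt (fun x => ∫ ζ in Ioi 0, φ ζ * g (x + ζ))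
      (∫ ζ in Ioi 0, -deriv φ ζ * (g (z + ζ) - g z)) z :=
  hφ.integral_mul_deriv_comp_add hg hgC hg'C z ▸
    _root_.hasDerivAt_integral_mul_comp_add hφ.integrableOn hg hgC hg'C z

end IsDecreasingKernel

theorem integral_sub_mul_deriv_eq {f W Q : ℝ → ℝ} (hf : Continuous f) (hW : ContDiff ℝ 1 W)
    (hQ : ∀ x, HasDerivAt Q (f x * deriv W x) x) (a b : ℝ) :
    ∫ σ in a..b, (f σ - f a) * deriv W σ = (Q b - Q a) - f a * (W b - W a) := by
  have hW' : Continuous (deriv W) := hW.continuous_deriv le_rfl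
  have hfW : IntervalIntegrable (fun σ => f σ * deriv W σ) volume a b :=
    (hf.mul hW').intervalIntegrable _ _
  have hcW : IntervalIntegrable (fun σ => f a * deriv W σ) volume a b :=
    (continuous_const.mul hW').intervalIntegrable _ _
  simp only [sub_mul]
  rw [intervalIntegral.integral_sub hfW hcW,
    intervalIntegral.integral_eq_sub_of_hasDerivAt (fun σ _ => hQ σ) hfW,
    intervalIntegral.integral_const_mul,
    intervalIntegral.integral_deriv_eq_sub (fun x _ => hW.differentiable one_ne_zero x)
      (hW'.intervalIntegrable _ _)]

theorem integral_sub_mul_nonneg {f g : ℝ → ℝ} (hf : Monotone f) (hg : ∀ x, 0 ≤ g x)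
    (a b : ℝ) : 0 ≤ ∫ σ in a..b, (f σ - f a) * g σ := by
  rcases le_total a b with hab | hba
  · exact intervalIntegral.integral_nonneg hab fun σ hσ =>
      mul_nonneg (sub_nonneg.2 (hf hσ.1)) (hg σ)
  · rw [intervalIntegral.integral_of_ge hba, neg_nonneg]
    exact setIntegral_nonpos measurableSet_Ioc fun σ hσ =>
      mul_nonpos_of_nonpos_of_nonneg (sub_nonpos.2 (hf hσ.2)) (hg σ)

theorem exists_bound_comp {F u : ℝ → ℝ} {M K : ℝ} (hF : ContDiff ℝ 1 F)
    (hu : Differentiable ℝ u) (huM : ∀ x, |u x| ≤ M) (hu'K : ∀ x, |deriv u x| ≤ K) :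
    ∃ C C', (∀ x, |F (u x)| ≤ C) ∧ ∀ x, |deriv (fun y => F (u y)) x| ≤ C' := by
  have hmem : ∀ x, u x ∈ Icc (-M) M := fun x => abs_le.1 (huM x)
  obtain ⟨C, hC⟩ := isCompact_Icc.exists_bound_of_continuousOn hF.continuous.continuousOn
  obtain ⟨C', hC'⟩ := (isCompact_Icc (a := -M) (b := M)).exists_bound_of_continuousOn
    (hF.continuous_deriv le_rfl).continuousOn
  refine ⟨C, C' * K, fun x => hC _ (hmem x), fun x => ?_⟩
  have hd : HasDerivAt (fun y => F (u y)) (deriv F (u x) * deriv u x) x :=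
    (hF.differentiable one_ne_zero _).hasDerivAt.comp x (hu x).hasDerivAt
  rw [hd.deriv, abs_mul]
  exact mul_le_mul (hC' _ (hmem x)) (hu'K x) (abs_nonneg _)
    ((abs_nonneg _).trans (hC' _ (hmem 0)))

theorem integral_deriv_deriv_eq_sub {η : ℝ → ℝ} (hη : ContDiff ℝ 2 η) (a b : ℝ) :
    ∫ μ in a..b, deriv (deriv η) μ = deriv η b - deriv η a :=
  intervalIntegral.integral_deriv_eq_sub (fun x _ => hη.deriv'.differentiable one_ne_zero x)
    ((hη.deriv'.continuous_deriv le_rfl).intervalIntegrable _ _)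

section Dterm

variable {Φ W η : ℝ → ℝ} {α : ℝ} {w : ℝ → ℝ → ℝ} {z t : ℝ}

theorem Dterm_eq_sub {Q : ℝ → ℝ} (hη : ContDiff ℝ 2 η) (hW : ContDiff ℝ 1 W)
    (hQ : ∀ x, HasDerivAt Q (deriv η x * deriv W x) x)
    (hWint : IntegrableOn (fun ζ => -deriv (fun s => 1 / α * Φ (s / α)) ζ *
      (W (w (z + ζ) t) - W (w z t))) (Ioi 0))
    (hQint : IntegrableOn (fun ζ => -deriv (fun s => 1 / α * Φ (s / α)) ζ *
      (Q (w (z + ζ) t) - Q (w z t))) (Ioi 0)) :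
    Dterm Φ α W η w z t =
      (∫ ζ in Ioi 0, -deriv (fun s => 1 / α * Φ (s / α)) ζ * (Q (w (z + ζ) t) - Q (w z t))) -
        deriv η (w z t) * ∫ ζ in Ioi 0,
          -deriv (fun s => 1 / α * Φ (s / α)) ζ * (W (w (z + ζ) t) - W (w z t)) := by
  rw [← integral_const_mul, ← integral_sub hQint (hWint.const_mul _)]
  refine integral_congr_ae (.of_forall fun ζ => ?_)
  simp only [integral_deriv_deriv_eq_sub hη,
    integral_sub_mul_deriv_eq (hη.continuous_deriv one_le_two) hW hQ]
  ring

theorem Dterm_nonneg (hΦ : IsDecreasingKernel Φ) (hα : 0 < α) (hη : ContDiff ℝ 2 η)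
    (hconv : ConvexOn ℝ univ η) (hW : ∀ x, 0 ≤ deriv W x) : 0 ≤ Dterm Φ α W η w z t := by
  refine setIntegral_nonneg measurableSet_Ioi fun ζ hζ => ?_
  refine mul_nonneg (neg_nonneg.2 ((hΦ.rescale hα).deriv_nonpos hζ)) ?_
  simp only [integral_deriv_deriv_eq_sub hη]
  exact integral_sub_mul_nonneg
    (monotoneOn_univ.1 (hconv.monotoneOn_deriv fun x _ => hη.differentiable two_ne_zero x)) hW _ _

end Dterm

theorem stmt_11_general
    (Φ : ℝ → ℝ) (α L T : ℝ) (hα : 0 < α)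
    (hΦdiff : ContDiff ℝ 1 Φ)
    (hΦnonneg : ∀ z : ℝ, 0 ≤ z → 0 ≤ Φ z)
    (hΦmono : ∀ x y : ℝ, 0 ≤ x → x ≤ y → Φ y ≤ Φ x)
    (hΦmass : ∫ ζ in Set.Ioi (0:ℝ), Φ ζ = 1)
    (W : ℝ → ℝ) (hW : ContDiff ℝ 1 W)
    (hW' : ∀ x : ℝ, 0 ≤ deriv W x ∧ deriv W x ≤ L)
    (w : ℝ → ℝ → ℝ)
    (hwC1 : ContDiff ℝ 1 (fun p : ℝ × ℝ => w p.1 p.2))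
    (hwB : ∃ M, ∀ z t, |w z t| ≤ M)
    (hwzB : ∃ K, ∀ z t, |deriv (fun x => w x t) z| ≤ K)
    (hpde : ∀ z t : ℝ, t ∈ Set.Ioo 0 T →
      HasDerivAt (fun s => w z s)
        (deriv (fun x => nlAvg Φ α (fun x' => W (w x' t)) x) z) t) :
    ∀ (η Q : ℝ → ℝ), ContDiff ℝ 2 η → ConvexOn ℝ Set.univ η →
      (∀ x : ℝ, HasDerivAt Q (deriv η x * deriv W x) x) →
      ∀ z t : ℝ, t ∈ Set.Ioo 0 T →
        (deriv (fun s => η (w z s)) t + Dterm Φ α W η w z t =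
          deriv (fun x => nlAvg Φ α (fun x' => Q (w x' t)) x) z) ∧
        0 ≤ Dterm Φ α W η w z t := by
  intro η Q hη hconv hQ z t ht
  obtain ⟨M, hM⟩ := hwB
  obtain ⟨K, hK⟩ := hwzB
  have hΦ : IsDecreasingKernel Φ := ⟨hΦdiff.differentiable one_ne_zero, hΦnonneg,
    fun x hx y _ hxy => hΦmono x y hx hxy, .of_integral_ne_zero (by simp [hΦmass])⟩
  have hQ1 : ContDiff ℝ 1 Q := contDiff_one_iff_deriv.2 ⟨fun x => (hQ x).differentiableAt,
    by rw [show deriv Q = deriv η * deriv W from funext fun x => (hQ x).deriv]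
       exact (hη.continuous_deriv one_le_two).mul (hW.continuous_deriv le_rfl)⟩
  have hu : Differentiable ℝ fun x => w x t :=
    (hwC1.comp (contDiff_id.prodMk contDiff_const)).differentiable one_ne_zero
  have hAvg : ∀ F : ℝ → ℝ, ContDiff ℝ 1 F →
      IntegrableOn (fun ζ => -deriv (fun s => 1 / α * Φ (s / α)) ζ *
        (F (w (z + ζ) t) - F (w z t))) (Ioi 0) ∧
      HasDerivAt (nlAvg Φ α fun x => F (w x t)) (∫ ζ in Ioi 0,
        -deriv (fun s => 1 / α * Φ (s / α)) ζ * (F (w (z + ζ) t) - F (w z t))) z := fun F hF => by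
    obtain ⟨C, C', hC, hC'⟩ := exists_bound_comp hF hu (hM · t) (hK · t)
    exact ⟨(hΦ.rescale hα).integrableOn_neg_deriv_mul_sub (hF.continuous.comp hu.continuous) hC z,
      (hΦ.rescale hα).hasDerivAt_integral_mul_comp_add
        ((hF.differentiable one_ne_zero).comp hu) hC hC' z⟩
  have htime : HasDerivAt (fun s => η (w z s)) (deriv η (w z t) *
      deriv (fun x => nlAvg Φ α (fun x' => W (w x' t)) x) z) t :=
    (hη.differentiable two_ne_zero _).hasDerivAt.comp t (hpde z t ht)
  refine ⟨?_, Dterm_nonneg hΦ hα hη hconv fun x => (hW' x).1⟩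
  rw [htime.deriv, Dterm_eq_sub hη hW hQ (hAvg W hW).1 (hAvg Q hQ1).1, (hAvg W hW).2.deriv,
    (hAvg Q hQ1).2.deriv]
  ring

/-- a bounded `C¹` solution (with bounded spatial derivative) of
the filtered nonlocal conservation law `∂_t w = ∂_z (W∘w)̄` satisfies, for every
entropy/entropy-flux pair `(η,Q)`, the entropy equality
`∂_t η(w) + D = ∂_z (Q∘w)̄` with `D ≥ 0`; in particular it dissipates every
convex entropy. -/
theorem stmt_11
    (Φ : ℝ → ℝ) (α L T : ℝ) (hα : 0 < α) (hT : 0 < T)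
    (hΦdiff : ContDiff ℝ 1 Φ)
    (hΦnonneg : ∀ z : ℝ, 0 ≤ z → 0 ≤ Φ z)
    (hΦmono : ∀ x y : ℝ, 0 ≤ x → x ≤ y → Φ y ≤ Φ x)
    (hΦmass : ∫ ζ in Set.Ioi (0:ℝ), Φ ζ = 1)
    (hΦmom : IntegrableOn (fun ζ => ζ * Φ ζ) (Set.Ioi (0:ℝ)))
    (W : ℝ → ℝ) (hW : ContDiff ℝ 1 W)
    (hW' : ∀ x : ℝ, 0 ≤ deriv W x ∧ deriv W x ≤ L)
    (w : ℝ → ℝ → ℝ)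
    (hwC1 : ContDiff ℝ 1 (fun p : ℝ × ℝ => w p.1 p.2))
    (hwB : ∃ M, ∀ z t, |w z t| ≤ M)
    (hwzB : ∃ K, ∀ z t, |deriv (fun x => w x t) z| ≤ K)
    (hpde : ∀ z t : ℝ, t ∈ Set.Ioo 0 T →
      HasDerivAt (fun s => w z s)
        (deriv (fun x => nlAvg Φ α (fun x' => W (w x' t)) x) z) t) :
    ∀ (η Q : ℝ → ℝ), ContDiff ℝ 2 η → ConvexOn ℝ Set.univ η →
      (∀ x : ℝ, HasDerivAt Q (deriv η x * deriv W x) x) →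
      ∀ z t : ℝ, t ∈ Set.Ioo 0 T →
        (deriv (fun s => η (w z s)) t + Dterm Φ α W η w z t =
          deriv (fun x => nlAvg Φ α (fun x' => Q (w x' t)) x) z) ∧
        0 ≤ Dterm Φ α W η w z t :=
  stmt_11_general Φ α L T hα hΦdiff hΦnonneg hΦmono hΦmass W hW hW' w hwC1 hwB hwzB hpde
end

section
/- Let α > 0 and let y : ℝ → ℝ be bounded and continuous. Define w(z) = (1/α) ∫₀^∞ e^{−ζ/α} y(z+ζ) dζ. Then w is differentiable on ℝ and satisfies the identity α w'(z) = w(z) − y(z) for every z ∈ ℝ (equivalently, y = w − α ∂_z w). Consequently, if w has finite total variation TV(w) on ℝ, then ∫_ℝ |y(z) − w(z)| dz ≤ α · TV(w). -/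
/-!
Substituting `t = z + ζ` gives `w z = α⁻¹ e^{z/α} ∫_z^∞ e^{-t/α} y t dt`, so the product
rule and the fundamental theorem of calculus give `α w' = w - y`. Hence `y - w = -α w'`, and the
bound is `∫ |f'| ≤ TV(f)`, valid for every function of bounded variation: if `v x` is the
variation of `f` on `[a, x]`, then `v - f` and `v + f` are monotone, so `|f'| ≤ v'` almost
everywhere, and the integral of the derivative of a monotone function is at most its increment.
-/

open MeasureTheory Set Filter Topology Real

theorem BoundedVariationOn.intervalIntegral_abs_deriv_le {f : ℝ → ℝ} {a b : ℝ}
    (hab : a ≤ b) (hf : BoundedVariationOn f (Icc a b)) :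
    ∫ x in a..b, |deriv f x| ≤ (eVariationOn f (Icc a b)).toReal := by
  have hf' := hf.locallyBoundedVariationOn
  have ha : a ∈ Icc a b := left_mem_Icc.2 hab
  set v := variationOnFromTo f (Icc a b) a
  have hv : MonotoneOn v (Icc a b) := variationOnFromTo.monotoneOn hf' ha
  have hvf_sub : MonotoneOn (v - f) (Icc a b) := variationOnFromTo.sub_self_monotoneOn hf' ha
  have hvf_add : MonotoneOn (v + f) (Icc a b) := variationOnFromTo.add_self_monotoneOn hf' ha
  have habs_le : ∀ᵐ x ∂volume.restrict (Icc a b), |deriv f x| ≤ deriv v x := by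
    rw [← restrict_Ioo_eq_restrict_Icc, ae_restrict_iff' measurableSet_Ioo]
    filter_upwards [hf'.ae_differentiableWithinAt_of_mem_real,
      hv.ae_differentiableWithinAt_of_mem] with x hfx hvx hx
    have hnhds : Icc a b ∈ 𝓝 x := Icc_mem_nhds hx.1 hx.2
    have hfd := (hfx (Ioo_subset_Icc_self hx)).differentiableAt hnhds
    have hvd := (hvx (Ioo_subset_Icc_self hx)).differentiableAt hnhds
    have h₁ := hvf_sub.derivWithin_nonneg (x := x)
    have h₂ := hvf_add.derivWithin_nonneg (x := x)
    rw [derivWithin_of_mem_nhds hnhds, deriv_sub hvd hfd] at h₁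
    rw [derivWithin_of_mem_nhds hnhds, deriv_add hvd hfd] at h₂
    exact abs_le.2 ⟨by linarith, by linarith⟩
  have hvab : v a ≤ v b := hv ha (right_mem_Icc.2 hab) hab
  rw [← uIcc_of_le hab] at hf hv
  calc ∫ x in a..b, |deriv f x| ≤ ∫ x in a..b, deriv v x :=
        intervalIntegral.integral_mono_ae_restrict hab hf.intervalIntegrable_deriv.abs
          hv.intervalIntegrable_deriv habs_le
    _ ≤ v b - v a := (uIcc_of_le (sub_nonneg.2 hvab) ▸ hv.intervalIntegral_deriv_mem_uIcc).2
    _ = (eVariationOn f (Icc a b)).toReal := by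
      simp [v, variationOnFromTo.self, variationOnFromTo.eq_of_le _ _ hab]

theorem BoundedVariationOn.intervalIntegral_abs_deriv_le_univ {f : ℝ → ℝ}
    (hf : BoundedVariationOn f univ) {a b : ℝ} (hab : a ≤ b) :
    ∫ x in a..b, |deriv f x| ≤ (eVariationOn f univ).toReal :=
  (hf.mono (subset_univ _)).intervalIntegral_abs_deriv_le hab |>.trans
    (ENNReal.toReal_mono hf (eVariationOn.mono f (subset_univ _)))

theorem BoundedVariationOn.integrable_deriv {f : ℝ → ℝ} (hf : BoundedVariationOn f univ) :
    Integrable (deriv f) :=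
  integrable_of_intervalIntegral_norm_bounded _
    (fun n : ℕ => (hf.mono (subset_univ (uIcc (-n : ℝ) n))).intervalIntegrable_deriv.1)
    (tendsto_neg_atTop_atBot.comp tendsto_natCast_atTop_atTop) tendsto_natCast_atTop_atTop
    (Eventually.of_forall fun n =>
      hf.intervalIntegral_abs_deriv_le_univ (neg_le_self n.cast_nonneg))

theorem BoundedVariationOn.integral_abs_deriv_le {f : ℝ → ℝ} (hf : BoundedVariationOn f univ) :
    ∫ x, |deriv f x| ≤ (eVariationOn f univ).toReal :=
  le_of_tendsto (intervalIntegral_tendsto_integral hf.integrable_deriv.abs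
      (tendsto_neg_atTop_atBot.comp tendsto_natCast_atTop_atTop) tendsto_natCast_atTop_atTop)
    (Eventually.of_forall fun n =>
      hf.intervalIntegral_abs_deriv_le_univ (neg_le_self n.cast_nonneg))

theorem setIntegral_Ioi_zero_comp_add {E : Type*} [NormedAddCommGroup E] [NormedSpace ℝ E]
    (g : ℝ → E) (z : ℝ) : ∫ ζ in Ioi 0, g (z + ζ) = ∫ t in Ioi z, g t := by
  have := (measurePreserving_add_left volume z).setIntegral_preimage_emb
    (measurableEmbedding_addLeft z) g (Ioi z)
  simpa using this

theorem hasDerivAt_setIntegral_Ioi {E : Type*} [NormedAddCommGroup E] [NormedSpace ℝ E]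
    [CompleteSpace E] {g : ℝ → E} (hg : Continuous g) (hint : ∀ a, IntegrableOn g (Ioi a))
    (z : ℝ) : HasDerivAt (fun x => ∫ t in Ioi x, g t) (-g z) z := by
  have hsplit :
      (fun x => ∫ t in Ioi x, g t) = fun x => (∫ t in Ioi z, g t) - ∫ t in z..x, g t := by
    ext x
    rw [← intervalIntegral.integral_Ioi_sub_Ioi' (hint z) (hint x), sub_sub_cancel]
  rw [hsplit]
  exact (intervalIntegral.integral_hasDerivAt_right (hg.intervalIntegrable _ _)
    (hg.stronglyMeasurableAtFilter _ _) hg.continuousAt).const_sub _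

noncomputable def expKernelAverage (α : ℝ) (y : ℝ → ℝ) (z : ℝ) : ℝ :=
  (1 / α) * ∫ ζ in Ioi 0, exp (-ζ / α) * y (z + ζ)

section ExpKernel

variable {α : ℝ} {y : ℝ → ℝ}

theorem integrableOn_Ioi_exp_neg_div_mul (hα : 0 < α) (hyB : ∃ M, ∀ z, |y z| ≤ M)
    (hy : AEStronglyMeasurable y) (a : ℝ) :
    IntegrableOn (fun t => exp (-t / α) * y t) (Ioi a) := by
  obtain ⟨M, hM⟩ := hyB
  have hexp : IntegrableOn (fun t => exp (-α⁻¹ * t)) (Ioi a) :=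
    exp_neg_integrableOn_Ioi a (inv_pos.2 hα)
  have h : IntegrableOn (fun t => exp (-α⁻¹ * t) * y t) (Ioi a) :=
    hexp.mul_bdd hy.restrict (Eventually.of_forall hM)
  exact h.congr_fun (fun t _ => by ring_nf) measurableSet_Ioi

theorem expKernelAverage_eq (z : ℝ) :
    expKernelAverage α y z = α⁻¹ * exp (z / α) * ∫ t in Ioi z, exp (-t / α) * y t := by
  rw [expKernelAverage, ← setIntegral_Ioi_zero_comp_add (fun t => exp (-t / α) * y t),
    mul_assoc, one_div, ← integral_const_mul (exp (z / α))]
  congr 1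
  refine integral_congr_ae (Eventually.of_forall fun ζ => ?_)
  simp only [← mul_assoc, ← exp_add]
  ring_nf

theorem hasDerivAt_expKernelAverage (hα : 0 < α) (hyB : ∃ M, ∀ z, |y z| ≤ M)
    (hyC : Continuous y) (z : ℝ) :
    HasDerivAt (expKernelAverage α y) ((expKernelAverage α y z - y z) / α) z := by
  have hexp : HasDerivAt (fun x => α⁻¹ * exp (x / α)) (α⁻¹ * (exp (z / α) * α⁻¹)) z := by
    simpa [div_eq_mul_inv] using (((hasDerivAt_id z).div_const α).exp).const_mul α⁻¹
  have hF := hasDerivAt_setIntegral_Ioi (by fun_prop)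
    (integrableOn_Ioi_exp_neg_div_mul hα hyB hyC.aestronglyMeasurable) z
  have hcancel : exp (z / α) * exp (-z / α) = 1 := by
    rw [← exp_add, neg_div, add_neg_cancel, exp_zero]
  refine ((hexp.mul hF).congr_deriv ?_).congr_of_eventuallyEq
    (Eventually.of_forall expKernelAverage_eq)
  rw [expKernelAverage_eq]
  linear_combination -α⁻¹ * y z * hcancel

end ExpKernel

/-- for the exponential kernel, the averaged function
`w(z) = (1/α)∫₀^∞ e^{−ζ/α} y(z+ζ) dζ` of a bounded continuous `y` is
differentiable and satisfies `α w' = w − y`; consequently, if `w` has finite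
total variation then `∫_ℝ |y − w| ≤ α · TV(w)`. -/
theorem stmt_16
    (α : ℝ) (hα : 0 < α)
    (y : ℝ → ℝ) (hyB : ∃ M, ∀ z, |y z| ≤ M) (hyC : Continuous y)
    (w : ℝ → ℝ)
    (hw : ∀ z : ℝ, w z = (1/α) * ∫ ζ in Set.Ioi (0:ℝ), Real.exp (-ζ/α) * y (z + ζ)) :
    (∀ z : ℝ, DifferentiableAt ℝ w z) ∧
    (∀ z : ℝ, α * deriv w z = w z - y z) ∧
    (BoundedVariationOn w Set.univ →
      Integrable (fun z => y z - w z) ∧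
      ∫ z : ℝ, |y z - w z| ≤ α * (eVariationOn w Set.univ).toReal) := by
  obtain rfl : w = expKernelAverage α y := funext hw
  have hderiv := hasDerivAt_expKernelAverage hα hyB hyC
  have hode : ∀ z, α * deriv (expKernelAverage α y) z = expKernelAverage α y z - y z := by
    intro z
    rw [(hderiv z).deriv]
    field_simp
  have hyw : (fun z => y z - expKernelAverage α y z) =
      fun z => -α * deriv (expKernelAverage α y) z := by
    ext z
    linarith [hode z]
  refine ⟨fun z => (hderiv z).differentiableAt, hode, fun hBV => ⟨?_, ?_⟩⟩
  · rw [hyw]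
    exact hBV.integrable_deriv.const_mul (-α)
  · calc ∫ z, |y z - expKernelAverage α y z|
          = α * ∫ z, |deriv (expKernelAverage α y) z| := by
          simp_rw [congrFun hyw, abs_mul, abs_neg, abs_of_pos hα, integral_const_mul]
      _ ≤ α * (eVariationOn (expKernelAverage α y) univ).toReal :=
          mul_le_mul_of_nonneg_left hBV.integral_abs_deriv_le hα.le
end

section
/- Let Φ : [0,∞) → [0,∞) be continuously differentiable, non-increasing, with ∫₀^∞ Φ = 1 and Φ(0) > 0, and let α > 0, Φ_α(ζ) = (1/α)Φ(ζ/α). Let y : ℝ → ℝ be bounded and continuous, and let w(z) = ∫₀^∞ Φ_α(ζ) y(z+ζ) dζ be its average. Suppose w has finite total variation TV(w) on ℝ. Then for every R > 0, ∫_{−R}^{R} |w(z) − y(z)| dz ≤ (α/Φ(0)) · TV(w) + (2R ‖y‖_∞ / Φ(0)) · ∫₀^∞ |Φ(0)Φ(ζ) + Φ'(ζ)| dζ. In particular, the last term vanishes for every ζ if and only if Φ(ζ) = e^{−ζ} Φ(0)-normalized, i.e., the exponential kernel is the only kernel for which this bound forces w − y → 0 in L¹_loc as α → 0. -/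
open MeasureTheory Set Filter Topology

/-!
Substituting `ζ = αt`, `w(z) = ∫₀^∞ Φ(t) y(z + αt) dt`. Fubini and an integration by parts
against the bounded function `t ↦ ∫_{a+αt}^{b+αt} y` show that `w` is differentiable with
`α w' = -(Φ(0) y + ∫₀^∞ Φ'(t) y(· + αt) dt)`, hence
`w - y = (α/Φ(0)) w' + (1/Φ(0)) ∫₀^∞ (Φ(0)Φ + Φ')(t) y(· + αt) dt`.
The last term is at most `‖y‖_∞/Φ(0) ∫₀^∞ |Φ(0)Φ + Φ'|`, and `∫_{-R}^R |w'| ≤ TV(w)` because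
`V + w` and `V - w` are monotone for the variation function `V` of `w`, so `|w'| ≤ V'` a.e.
The exponential kernel is the unique solution of the linear ODE `Φ' = -Φ(0) Φ` on `[0, ∞)`.
-/

theorem integral_abs_deriv_le_eVariationOn {f : ℝ → ℝ} (hf : LocallyBoundedVariationOn f univ)
    {a b : ℝ} (hab : a ≤ b) :
    ∫ x in a..b, |deriv f x| ≤ (eVariationOn f (Icc a b)).toReal := by
  set V := variationOnFromTo f univ a
  have hV : Monotone V := monotoneOn_univ.1 (variationOnFromTo.monotoneOn hf (mem_univ a))
  have hVadd : Monotone (V + f) :=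
    monotoneOn_univ.1 (variationOnFromTo.add_self_monotoneOn hf (mem_univ a))
  have hVsub : Monotone (V - f) :=
    monotoneOn_univ.1 (variationOnFromTo.sub_self_monotoneOn hf (mem_univ a))
  have hle : ∀ᵐ x, |deriv f x| ≤ deriv V x := by
    filter_upwards [hV.ae_differentiableAt] with x hVx
    by_cases hfx : DifferentiableAt ℝ f x
    · have hadd := hVadd.deriv_nonneg (x := x)
      have hsub := hVsub.deriv_nonneg (x := x)
      rw [deriv_add hVx hfx] at hadd
      rw [deriv_sub hVx hfx] at hsub
      exact abs_le.2 ⟨by linarith, by linarith⟩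
    · rw [deriv_zero_of_not_differentiableAt hfx, abs_zero]
      exact hV.deriv_nonneg
  have hfint : IntervalIntegrable (fun x => |deriv f x|) volume a b := by
    refine (BoundedVariationOn.intervalIntegrable_deriv ?_).abs
    simpa [uIcc_of_le hab] using hf a b (mem_univ a) (mem_univ b)
  calc ∫ x in a..b, |deriv f x|
      ≤ ∫ x in a..b, deriv V x :=
        intervalIntegral.integral_mono_ae hab hfint
          (hV.monotoneOn _).intervalIntegrable_deriv hle
    _ ≤ V b - V a := by
        have h := ((hV.monotoneOn (uIcc a b)).intervalIntegral_deriv_mem_uIcc).2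
        rwa [max_eq_right (sub_nonneg.2 (hV hab))] at h
    _ = (eVariationOn f (Icc a b)).toReal := by
        simp [V, variationOnFromTo.self, variationOnFromTo.eq_of_le f univ hab]

theorem tendsto_atTop_zero_of_antitoneOn_of_integrableOn {f : ℝ → ℝ}
    (hmono : AntitoneOn f (Ici 0)) (hnonneg : ∀ x, 0 ≤ x → 0 ≤ f x)
    (hint : IntegrableOn f (Ioi 0)) :
    Tendsto f atTop (𝓝 0) := by
  -- `x f(x) ≤ ∫₀ˣ f ≤ ∫₀^∞ f`
  have hbound : ∀ x, 0 < x → f x ≤ (∫ t in Ioi 0, f t) / x := by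
    intro x hx
    rw [le_div_iff₀ hx]
    calc f x * x = ∫ _ in (0:ℝ)..x, f x := by simp [mul_comm]
      _ ≤ ∫ t in (0:ℝ)..x, f t := by
          refine intervalIntegral.integral_mono_on hx.le intervalIntegrable_const
            ((intervalIntegrable_iff_integrableOn_Ioc_of_le hx.le).2
              (hint.mono_set Ioc_subset_Ioi_self)) fun t ht => ?_
          exact hmono ht.1 hx.le ht.2
      _ ≤ ∫ t in Ioi 0, f t := by
          rw [intervalIntegral.integral_of_le hx.le]
          exact setIntegral_mono_set hint (ae_restrict_of_forall_mem measurableSet_Ioi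
            fun t ht => hnonneg t (le_of_lt ht)) Ioc_subset_Ioi_self.eventuallyLE
  refine tendsto_of_tendsto_of_tendsto_of_le_of_le' tendsto_const_nhds
    (tendsto_const_nhds.div_atTop tendsto_id :
      Tendsto (fun x => (∫ t in Ioi 0, f t) / x) atTop (𝓝 0)) ?_ ?_
  · filter_upwards [eventually_ge_atTop 0] with x hx using hnonneg x hx
  · filter_upwards [eventually_gt_atTop 0] with x hx using hbound x hx

theorem hasDerivAt_intervalIntegral_affine {y : ℝ → ℝ} (hy : Continuous y) (a b α t : ℝ) :
    HasDerivAt (fun s => ∫ u in (a + α * s)..(b + α * s), y u)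
      (α * (y (b + α * t) - y (a + α * t))) t := by
  have hY : ∀ c, HasDerivAt (fun s => ∫ u in (0:ℝ)..(c + α * s), y u)
      (y (c + α * t) * α) t :=
    fun c => (hy.integral_hasStrictDerivAt 0 _).hasDerivAt.comp t
      (((hasDerivAt_id t).const_mul α).const_add c |>.congr_deriv (mul_one α))
  have h := (hY b).sub (hY a)
  rw [← mul_sub_right_distrib, mul_comm] at h
  refine h.congr_of_eventuallyEq (Eventually.of_forall fun s => ?_)
  exact (intervalIntegral.integral_interval_sub_left (hy.intervalIntegrable _ _)
    (hy.intervalIntegrable _ _)).symm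

/-- With `k = Φ` this is the average `w(z) = ∫₀^∞ Φ_α(ζ) y(z + ζ) dζ` after substituting
`ζ = αt`. -/
noncomputable def kernelAverage (k : ℝ → ℝ) (α : ℝ) (y : ℝ → ℝ) (z : ℝ) : ℝ :=
  ∫ t in Ioi 0, k t * y (z + α * t)

section KernelAverage

variable {k l y : ℝ → ℝ} {α M : ℝ}

theorem integrableOn_kernelAverage_integrand (hk : IntegrableOn k (Ioi 0)) (hy : Continuous y)
    (hM : ∀ z, |y z| ≤ M) (z : ℝ) : IntegrableOn (fun t => k t * y (z + α * t)) (Ioi 0) :=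
  hk.mul_bdd (by fun_prop : Continuous fun t => y (z + α * t)).aestronglyMeasurable
    (ae_of_all _ fun t => (Real.norm_eq_abs _).trans_le (hM _))

theorem kernelAverage_const_mul_add (c : ℝ) (hk : IntegrableOn k (Ioi 0))
    (hl : IntegrableOn l (Ioi 0)) (hy : Continuous y) (hM : ∀ z, |y z| ≤ M) (z : ℝ) :
    kernelAverage (fun t => c * k t + l t) α y z =
      c * kernelAverage k α y z + kernelAverage l α y z := by
  simp only [kernelAverage, add_mul, mul_assoc]
  rw [integral_add ((integrableOn_kernelAverage_integrand hk hy hM z).const_mul c)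
    (integrableOn_kernelAverage_integrand hl hy hM z), integral_const_mul]

theorem abs_kernelAverage_le (hk : IntegrableOn k (Ioi 0)) (hM : ∀ z, |y z| ≤ M) (z : ℝ) :
    |kernelAverage k α y z| ≤ M * ∫ t in Ioi 0, |k t| := by
  rw [mul_comm, ← integral_mul_const, ← Real.norm_eq_abs]
  refine norm_integral_le_of_norm_le (hk.norm.mul_const M) (ae_of_all _ fun t => ?_)
  rw [Real.norm_eq_abs, abs_mul]
  exact mul_le_mul_of_nonneg_left (hM _) (abs_nonneg _)

theorem continuous_kernelAverage (hk : IntegrableOn k (Ioi 0)) (hy : Continuous y)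
    (hM : ∀ z, |y z| ≤ M) :
    Continuous (kernelAverage k α y) := by
  refine continuous_of_dominated (bound := fun t => ‖k t‖ * M)
    (fun z => (integrableOn_kernelAverage_integrand hk hy hM z).aestronglyMeasurable)
    (fun z => ae_of_all _ fun t => ?_) (hk.norm.mul_const M)
    (ae_of_all _ fun t => by fun_prop)
  rw [norm_mul, Real.norm_eq_abs (y _)]
  exact mul_le_mul_of_nonneg_left (hM _) (norm_nonneg _)

theorem intervalIntegral_kernelAverage (hk : IntegrableOn k (Ioi 0)) (hy : Continuous y)
    (hM : ∀ z, |y z| ≤ M) {a b : ℝ} (hab : a ≤ b) :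
    ∫ z in a..b, kernelAverage k α y z =
      ∫ t in Ioi 0, k t * ∫ u in (a + α * t)..(b + α * t), y u := by
  have hprod : Integrable (Function.uncurry fun z t => k t * y (z + α * t))
      ((volume.restrict (Ioc a b)).prod (volume.restrict (Ioi 0))) := by
    refine ((integrableOn_const (C := M) measure_Ioc_lt_top.ne).mul_prod hk.norm).mono'
      ((hk.aestronglyMeasurable.comp_snd.mul ?_ : AEStronglyMeasurable (fun p : ℝ × ℝ =>
        k p.2 * y (p.1 + α * p.2)) _)) (ae_of_all _ fun p => ?_)
    · exact (by fun_prop : Continuous fun p : ℝ × ℝ => y (p.1 + α * p.2)).aestronglyMeasurable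
    · simp only [Function.uncurry, norm_mul, Real.norm_eq_abs]
      rw [mul_comm M]
      exact mul_le_mul_of_nonneg_left (hM _) (abs_nonneg _)
  simp only [kernelAverage]
  rw [intervalIntegral.integral_of_le hab, integral_integral_swap hprod]
  refine integral_congr_ae (ae_of_all _ fun t => ?_)
  dsimp only
  rw [integral_const_mul, ← intervalIntegral.integral_of_le hab,
    intervalIntegral.integral_comp_add_right (fun u => y u)]

theorem intervalIntegral_kernelAverage_deriv (hk : Differentiable ℝ k)
    (hki : IntegrableOn k (Ioi 0)) (hk'i : IntegrableOn (deriv k) (Ioi 0))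
    (hk_lim : Tendsto k atTop (𝓝 0)) (hy : Continuous y) (hM : ∀ z, |y z| ≤ M)
    {a b : ℝ} (hab : a ≤ b) :
    ∫ z in a..b, kernelAverage (deriv k) α y z =
      -(k 0 * ∫ z in a..b, y z) - α * (kernelAverage k α y b - kernelAverage k α y a) := by
  have hint := integrableOn_kernelAverage_integrand (α := α) hki hy hM
  set D : ℝ → ℝ := fun t => ∫ u in (a + α * t)..(b + α * t), y u
  set D' : ℝ → ℝ := fun t => α * (y (b + α * t) - y (a + α * t))
  have hD : ∀ t, HasDerivAt D (D' t) t := hasDerivAt_intervalIntegral_affine hy a b α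
  have hD_bdd : ∀ t, |D t| ≤ M * (b - a) := fun t => by
    have h := intervalIntegral.norm_integral_le_of_norm_le_const
      (fun u _ => (Real.norm_eq_abs (y u)).trans_le (hM u)) (a := a + α * t) (b := b + α * t)
    rwa [Real.norm_eq_abs, add_sub_add_right_eq_sub, abs_of_nonneg (sub_nonneg.2 hab)] at h
  have hkD' :
      ∫ t in Ioi 0, k t * D' t = α * (kernelAverage k α y b - kernelAverage k α y a) := by
    simp only [D', kernelAverage]
    rw [← integral_sub (hint b) (hint a), ← integral_const_mul]
    congr 1 with t
    ring
  have hDc : Continuous D := continuous_iff_continuousAt.2 fun t => (hD t).continuousAt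
  have hk'D : IntegrableOn (fun t => deriv k t * D t) (Ioi 0) :=
    hk'i.mul_bdd hDc.aestronglyMeasurable
      (ae_of_all _ fun t => (Real.norm_eq_abs _).trans_le (hD_bdd t))
  have hkD'i : IntegrableOn (fun t => k t * D' t) (Ioi 0) := by
    refine (((hint b).sub (hint a)).const_mul α).congr (ae_of_all _ fun t => ?_)
    simp only [D', Pi.sub_apply]
    ring
  have hparts := integral_Ioi_mul_deriv_eq_deriv_mul (a := 0) (a' := k 0 * D 0) (b' := 0)
    (fun t _ => (hk t).hasDerivAt) (fun t _ => hD t) hkD'i hk'D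
    (((hk.continuous.mul hDc).tendsto 0).mono_left nhdsWithin_le_nhds)
    (hk_lim.zero_mul_isBoundedUnder_le (isBoundedUnder_of
      ⟨M * (b - a), fun t => (Real.norm_eq_abs _).trans_le (hD_bdd t)⟩))
  have hD0 : D 0 = ∫ z in a..b, y z := by simp [D]
  rw [hkD', hD0] at hparts
  rw [intervalIntegral_kernelAverage hk'i hy hM hab]
  linarith

theorem hasDerivAt_kernelAverage (hα : α ≠ 0) (hk : Differentiable ℝ k)
    (hki : IntegrableOn k (Ioi 0)) (hk'i : IntegrableOn (deriv k) (Ioi 0))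
    (hk_lim : Tendsto k atTop (𝓝 0)) (hy : Continuous y) (hM : ∀ z, |y z| ≤ M) (z : ℝ) :
    HasDerivAt (kernelAverage k α y) (-(k 0 * y z + kernelAverage (deriv k) α y z) / α) z := by
  set g : ℝ → ℝ := fun x => -(k 0 * y x + kernelAverage (deriv k) α y x) / α
  have hgc : Continuous g := by
    have := continuous_kernelAverage (α := α) hk'i hy hM
    fun_prop
  have hFTC : ∀ a b, a ≤ b →
      ∫ x in a..b, g x = kernelAverage k α y b - kernelAverage k α y a := by
    intro a b hab
    simp only [g]
    rw [intervalIntegral.integral_div, intervalIntegral.integral_neg,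
      intervalIntegral.integral_add ((hy.intervalIntegrable a b).const_mul _)
        ((continuous_kernelAverage hk'i hy hM).intervalIntegrable a b),
      intervalIntegral.integral_const_mul,
      intervalIntegral_kernelAverage_deriv hk hki hk'i hk_lim hy hM hab]
    field_simp
    ring
  have hA : ∀ x, kernelAverage k α y z + ∫ t in z..x, g t = kernelAverage k α y x := by
    intro x
    rcases le_total z x with h | h
    · rw [hFTC z x h]; ring
    · rw [intervalIntegral.integral_symm, hFTC x z h]; ring
  exact ((hgc.integral_hasStrictDerivAt z z).hasDerivAt.const_add _).congr_of_eventuallyEq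
    (Eventually.of_forall fun x => (hA x).symm)

theorem kernelAverage_sub_eq (hk0 : k 0 ≠ 0) (hα : α ≠ 0) (hk : Differentiable ℝ k)
    (hki : IntegrableOn k (Ioi 0)) (hk'i : IntegrableOn (deriv k) (Ioi 0))
    (hk_lim : Tendsto k atTop (𝓝 0)) (hy : Continuous y) (hM : ∀ z, |y z| ≤ M) (z : ℝ) :
    kernelAverage k α y z - y z = α / k 0 * deriv (kernelAverage k α y) z +
      1 / k 0 * kernelAverage (fun t => k 0 * k t + deriv k t) α y z := by
  rw [(hasDerivAt_kernelAverage hα hk hki hk'i hk_lim hy hM z).deriv,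
    kernelAverage_const_mul_add (k 0) hki hk'i hy hM z]
  field_simp
  ring

theorem abs_kernelAverage_sub_le (hk0 : 0 < k 0) (hα : 0 < α) (hk : Differentiable ℝ k)
    (hki : IntegrableOn k (Ioi 0)) (hk'i : IntegrableOn (deriv k) (Ioi 0))
    (hk_lim : Tendsto k atTop (𝓝 0)) (hy : Continuous y) (hM : ∀ z, |y z| ≤ M) (z : ℝ) :
    |kernelAverage k α y z - y z| ≤ α / k 0 * |deriv (kernelAverage k α y) z| +
      M / k 0 * ∫ t in Ioi 0, |k 0 * k t + deriv k t| := by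
  rw [kernelAverage_sub_eq hk0.ne' hα.ne' hk hki hk'i hk_lim hy hM z]
  refine (abs_add_le _ _).trans (add_le_add ?_ ?_)
  · rw [abs_mul, abs_of_pos (div_pos hα hk0)]
  · rw [abs_mul, abs_of_pos (one_div_pos.2 hk0), div_eq_mul_one_div M, mul_comm M, mul_assoc]
    exact mul_le_mul_of_nonneg_left
      (abs_kernelAverage_le ((hki.const_mul _).add hk'i) hM z) (by positivity)

theorem intervalIntegral_abs_kernelAverage_sub_le (hk0 : 0 < k 0) (hα : 0 < α)
    (hk : Differentiable ℝ k) (hki : IntegrableOn k (Ioi 0)) (hk'i : IntegrableOn (deriv k) (Ioi 0))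
    (hk_lim : Tendsto k atTop (𝓝 0)) (hy : Continuous y) (hM : ∀ z, |y z| ≤ M)
    (hBV : LocallyBoundedVariationOn (kernelAverage k α y) univ) {a b : ℝ} (hab : a ≤ b) :
    ∫ z in a..b, |kernelAverage k α y z - y z| ≤
      α / k 0 * (eVariationOn (kernelAverage k α y) (Icc a b)).toReal +
        (b - a) * M / k 0 * ∫ t in Ioi 0, |k 0 * k t + deriv k t| := by
  set A := kernelAverage k α y
  set K := ∫ t in Ioi 0, |k 0 * k t + deriv k t|
  have hA'int : IntervalIntegrable (fun z => |deriv A z|) volume a b := by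
    refine (BoundedVariationOn.intervalIntegrable_deriv ?_).abs
    simpa [uIcc_of_le hab] using hBV a b (mem_univ a) (mem_univ b)
  calc ∫ z in a..b, |A z - y z|
      ≤ ∫ z in a..b, (α / k 0 * |deriv A z| + M / k 0 * K) :=
        intervalIntegral.integral_mono_on hab
          (((continuous_kernelAverage (α := α) hki hy hM).sub hy).abs.intervalIntegrable a b)
          ((hA'int.const_mul _).add intervalIntegrable_const)
          fun z _ => abs_kernelAverage_sub_le hk0 hα hk hki hk'i hk_lim hy hM z
    _ = α / k 0 * (∫ z in a..b, |deriv A z|) + (b - a) * M / k 0 * K := by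
        rw [intervalIntegral.integral_add (hA'int.const_mul _) intervalIntegrable_const,
          intervalIntegral.integral_const_mul, intervalIntegral.integral_const, smul_eq_mul]
        ring
    _ ≤ α / k 0 * (eVariationOn A (Icc a b)).toReal + (b - a) * M / k 0 * K := by
        gcongr
        exact integral_abs_deriv_le_eVariationOn hBV hab

end KernelAverage

theorem integral_rescaled_kernel_eq_kernelAverage {α : ℝ} (hα : 0 < α) (k y : ℝ → ℝ) (z : ℝ) :
    ∫ ζ in Ioi 0, 1 / α * k (ζ / α) * y (z + ζ) = kernelAverage k α y z := by
  have h := integral_comp_mul_left_Ioi (fun ζ => k (ζ / α) * y (z + ζ)) 0 hα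
  simp only [mul_zero, mul_div_cancel_left₀ _ hα.ne', smul_eq_mul] at h
  simp only [kernelAverage, h, mul_assoc, integral_const_mul, one_div]

theorem eq_mul_exp_of_mul_add_deriv_eq_zero {f : ℝ → ℝ} {c : ℝ} (hf : Differentiable ℝ f)
    (h : ∀ ζ, 0 ≤ ζ → c * f ζ + deriv f ζ = 0) {ζ : ℝ} (hζ : 0 ≤ ζ) :
    f ζ = f 0 * Real.exp (-c * ζ) := by
  have hF : ∀ t ∈ Ico 0 ζ, HasDerivWithinAt (fun t => f t * Real.exp (c * t)) 0 (Ici t) t := by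
    intro t ht
    have hexp : HasDerivAt (fun s => Real.exp (c * s)) (Real.exp (c * t) * c) t := by
      simpa using ((hasDerivAt_id t).const_mul c).exp
    have h0 : deriv f t * Real.exp (c * t) + f t * (Real.exp (c * t) * c) = 0 := by
      linear_combination Real.exp (c * t) * h t ht.1
    have hd := ((hf t).hasDerivAt.mul hexp).hasDerivWithinAt (s := Ici t)
    rw [h0] at hd
    exact hd
  have hconst := constant_of_has_deriv_right_zero
    (hf.continuous.mul (by fun_prop)).continuousOn hF ζ ⟨hζ, le_rfl⟩
  simp only [Pi.mul_apply, mul_zero, Real.exp_zero, mul_one] at hconst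
  rw [← hconst, mul_assoc, ← Real.exp_add, neg_mul, add_neg_cancel, Real.exp_zero, mul_one]

theorem mul_add_deriv_eq_zero_of_eq_mul_exp {f : ℝ → ℝ} {c : ℝ} (hf : Differentiable ℝ f)
    (h : ∀ ζ, 0 ≤ ζ → f ζ = f 0 * Real.exp (-c * ζ)) {ζ : ℝ} (hζ : 0 ≤ ζ) :
    c * f ζ + deriv f ζ = 0 := by
  have hexp : HasDerivAt (fun s => f 0 * Real.exp (-c * s))
      (f 0 * (Real.exp (-c * ζ) * -c)) ζ := by
    simpa using (((hasDerivAt_id ζ).const_mul (-c)).exp).const_mul (f 0)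
  -- at `ζ = 0` only the right-hand behaviour of `f` is known, so compare derivatives on `[ζ, ∞)`
  have hwithin : HasDerivWithinAt f (f 0 * (Real.exp (-c * ζ) * -c)) (Ici ζ) ζ :=
    hexp.hasDerivWithinAt.congr (fun x hx => h x (hζ.trans hx)) (h ζ hζ)
  rw [(uniqueDiffWithinAt_Ici ζ).eq_deriv _ (hf ζ).hasDerivAt.hasDerivWithinAt hwithin, h ζ hζ]
  ring

/-- for a `C¹`, non-increasing, unit-mass kernel `Φ` with
`Φ(0) > 0`, the difference between a bounded continuous function `y` and its
average `w(z) = ∫₀^∞ Φ_α(ζ) y(z+ζ) dζ` satisfies, for every `R > 0`,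
`∫_{−R}^{R} |w − y| ≤ (α/Φ(0)) TV(w) + (2R‖y‖_∞/Φ(0)) ∫₀^∞ |Φ(0)Φ(ζ) + Φ'(ζ)| dζ`;
moreover the last integrand vanishes identically on `[0,∞)` if and only if
`Φ` is the (`Φ(0)`-normalized) exponential kernel. -/
theorem stmt_18
    (Φ : ℝ → ℝ) (α : ℝ) (hα : 0 < α)
    (hΦdiff : ContDiff ℝ 1 Φ)
    (hΦmono : ∀ x y : ℝ, 0 ≤ x → x ≤ y → Φ y ≤ Φ x)
    (hΦnonneg : ∀ z : ℝ, 0 ≤ z → 0 ≤ Φ z)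
    (hΦmass : ∫ ζ in Set.Ioi (0:ℝ), Φ ζ = 1)
    (hΦ0 : 0 < Φ 0)
    (y : ℝ → ℝ) (hyB : ∃ M, ∀ z, |y z| ≤ M) (hyC : Continuous y)
    (w : ℝ → ℝ)
    (hw : ∀ z : ℝ, w z = ∫ ζ in Set.Ioi (0:ℝ), (1/α) * Φ (ζ/α) * y (z + ζ))
    (hwBV : BoundedVariationOn w Set.univ) :
    (∀ R : ℝ, 0 < R →
      ∫ z in Set.Icc (-R) R, |w z - y z| ≤
        (α / Φ 0) * (eVariationOn w Set.univ).toReal +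
          (2 * R * (⨆ z : ℝ, |y z|) / Φ 0) *
            ∫ ζ in Set.Ioi (0:ℝ), |Φ 0 * Φ ζ + deriv Φ ζ|) ∧
    ((∀ ζ : ℝ, 0 ≤ ζ → Φ 0 * Φ ζ + deriv Φ ζ = 0) ↔
      (∀ ζ : ℝ, 0 ≤ ζ → Φ ζ = Φ 0 * Real.exp (-(Φ 0) * ζ))) := by
  have hΦd : Differentiable ℝ Φ := hΦdiff.differentiable one_ne_zero
  have hΦanti : AntitoneOn Φ (Ici 0) := fun x hx y _ hxy => hΦmono x y hx hxy
  have hΦi : IntegrableOn Φ (Ioi 0) := Integrable.of_integral_ne_zero (by simp [hΦmass])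
  have hΦlim := tendsto_atTop_zero_of_antitoneOn_of_integrableOn hΦanti hΦnonneg hΦi
  have hΦ'i : IntegrableOn (deriv Φ) (Ioi 0) :=
    integrableOn_Ioi_deriv_of_nonpos' (fun x _ => (hΦd x).hasDerivAt)
      (fun x hx => by
        rw [← derivWithin_of_mem_nhds (Ici_mem_nhds (mem_Ioi.1 hx))]
        exact hΦanti.derivWithin_nonpos) hΦlim
  obtain ⟨M, hM⟩ := hyB
  have hsup : ∀ z, |y z| ≤ ⨆ z, |y z| := le_ciSup ⟨M, by rintro _ ⟨z, rfl⟩; exact hM z⟩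
  obtain rfl : w = kernelAverage Φ α y :=
    funext fun z => (hw z).trans (integral_rescaled_kernel_eq_kernelAverage hα Φ y z)
  refine ⟨fun R hR => ?_, ⟨fun h ζ => eq_mul_exp_of_mul_add_deriv_eq_zero hΦd h,
    fun h ζ => mul_add_deriv_eq_zero_of_eq_mul_exp hΦd h⟩⟩
  rw [integral_Icc_eq_integral_Ioc, ← intervalIntegral.integral_of_le (by linarith)]
  refine (intervalIntegral_abs_kernelAverage_sub_le hΦ0 hα hΦd hΦi hΦ'i hΦlim hyC hsup
    hwBV.locallyBoundedVariationOn (by linarith)).trans ?_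
  rw [show R - -R = 2 * R by ring]
  gcongr
  exact eVariationOn.mono _ (subset_univ _)
end
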